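/- arXiv:2308.01360 — 2 statements merged into one kernel-verified Lean document; each statement's English description precedes it below -/
import Mathlib

section
/- Let M be positive definite, δ = 0, and c^T M^{-1} c = 1. Then f(x) = c^T x + d - sqrt((x-x*)^T M (x-x*)) attains its global maximum value c^T x* + d at every point of the ray {x* + t M^{-1} c : t ≥ 0}. -/
open Matrix

noncomputable def enorm {m : ℕ} (v : Fin m → ℝ) : ℝ := Real.sqrt (∑ i, v i ^ 2)

/-! Writing `u = M⁻¹ c`, Cauchy–Schwarz for the inner product `⟨u, y⟩_M = uᵀ M y` gives
`cᵀ y = ⟨u, y⟩_M ≤ √(cᵀ M⁻¹ c) · √(yᵀ M y) = √(yᵀ M y)`, so `f x ≤ cᵀ x* + d`. Along the ray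
`x* + t u` Cauchy–Schwarz is an equality: both `cᵀ (t u)` and `√((t u)ᵀ M (t u))` equal `t`. -/

namespace Matrix

variable {ι : Type*} [Fintype ι]

theorem PosSemidef.dotProduct_mulVec_le_sqrt_mul_sqrt {M : Matrix ι ι ℝ} (hM : M.PosSemidef)
    (u v : ι → ℝ) : u ⬝ᵥ M *ᵥ v ≤ √(u ⬝ᵥ M *ᵥ u) * √(v ⬝ᵥ M *ᵥ v) := by
  let := M.toSeminormedAddCommGroup hM
  let := M.toInnerProductSpace hM
  have h := real_inner_le_norm u v
  rw [norm_eq_sqrt_real_inner, norm_eq_sqrt_real_inner] at h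
  change (M *ᵥ v) ⬝ᵥ star u ≤ √((M *ᵥ u) ⬝ᵥ star u) * √((M *ᵥ v) ⬝ᵥ star v) at h
  simpa only [star_trivial, dotProduct_comm (M *ᵥ _)] using h

theorem smul_dotProduct_mulVec_smul (M : Matrix ι ι ℝ) (t : ℝ) (v : ι → ℝ) :
    (t • v) ⬝ᵥ M *ᵥ (t • v) = t ^ 2 * (v ⬝ᵥ M *ᵥ v) := by
  rw [mulVec_smul, smul_dotProduct, dotProduct_smul, smul_eq_mul, smul_eq_mul]
  ring

variable [DecidableEq ι]

theorem inv_mulVec_dotProduct_mulVec_inv_mulVec {M : Matrix ι ι ℝ} (hM : IsUnit M.det)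
    (c : ι → ℝ) : M⁻¹ *ᵥ c ⬝ᵥ M *ᵥ (M⁻¹ *ᵥ c) = c ⬝ᵥ M⁻¹ *ᵥ c := by
  rw [mulVec_mulVec, mul_nonsing_inv M hM, one_mulVec, dotProduct_comm]

theorem PosDef.dotProduct_le_sqrt_mul_sqrt {M : Matrix ι ι ℝ} (hM : M.PosDef) (c y : ι → ℝ) :
    c ⬝ᵥ y ≤ √(c ⬝ᵥ M⁻¹ *ᵥ c) * √(y ⬝ᵥ M *ᵥ y) := by
  have hdet : IsUnit M.det := isUnit_iff_ne_zero.mpr hM.det_pos.ne'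
  have hsymm : Mᵀ = M := (isHermitian_iff_isSymm.mp hM.isHermitian).eq
  have hcy : c ⬝ᵥ y = M⁻¹ *ᵥ c ⬝ᵥ M *ᵥ y := by
    rw [dotProduct_mulVec, ← mulVec_transpose, hsymm, mulVec_mulVec, mul_nonsing_inv M hdet,
      one_mulVec]
  rw [hcy, ← inv_mulVec_dotProduct_mulVec_inv_mulVec hdet]
  exact hM.posSemidef.dotProduct_mulVec_le_sqrt_mul_sqrt _ _

end Matrix

theorem socf_max_case2 {n : ℕ} (c xs : Fin n → ℝ) (d : ℝ)
    (M : Matrix (Fin n) (Fin n) ℝ) (hM : M.PosDef)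
    (hc : c ⬝ᵥ M⁻¹.mulVec c = 1)
    (f : (Fin n → ℝ) → ℝ)
    (hf : ∀ x, f x = c ⬝ᵥ x + d - Real.sqrt ((x - xs) ⬝ᵥ M.mulVec (x - xs))) :
    (∀ x, f x ≤ c ⬝ᵥ xs + d) ∧
      ∀ t : ℝ, 0 ≤ t → f (xs + t • M⁻¹.mulVec c) = c ⬝ᵥ xs + d := by
  have hdet : IsUnit M.det := isUnit_iff_ne_zero.mpr hM.det_pos.ne'
  refine ⟨fun x => ?_, fun t ht => ?_⟩
  · have hcs := hM.dotProduct_le_sqrt_mul_sqrt c (x - xs)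
    rw [hc, Real.sqrt_one, one_mul, dotProduct_sub] at hcs
    rw [hf]
    linarith
  · rw [hf, add_sub_cancel_left, smul_dotProduct_mulVec_smul,
      inv_mulVec_dotProduct_mulVec_inv_mulVec hdet, hc, mul_one, Real.sqrt_sq ht,
      dotProduct_add, dotProduct_smul, hc, smul_eq_mul, mul_one]
    ring
end

section
/- Let M be positive definite, δ > 0, and c^T M^{-1} c = 1. Then f(x) = c^T x + d - sqrt(δ² + (x-x*)^T M (x-x*)) satisfies f(x) < c^T x* + d for all x, but sup f = c^T x* + d is not attained. -/
/-!
Put `u = M⁻¹ c`. Cauchy–Schwarz for the form `vᵀ M w` gives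
`(cᵀ v)² = (uᵀ M v)² ≤ (cᵀ M⁻¹ c) (vᵀ M v) = vᵀ M v < δ² + vᵀ M v`, which is the strict bound.
Along the ray `x = x* + t u` one has `f x = cᵀ x* + d + (t - √(δ² + t²))`, and
`t - √(δ² + t²) → 0` as `t → ∞`, so the bound is the supremum.
-/

open Matrix

open Filter Topology

theorem tendsto_sub_sqrt_add_sq_atTop {a : ℝ} (ha : 0 ≤ a) :
    Tendsto (fun t => t - √(a + t ^ 2)) atTop (𝓝 0) := by
  have hlower : Tendsto (fun t : ℝ => -(a / t)) atTop (𝓝 0) := by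
    simpa using ((tendsto_const_nhds (x := a)).div_atTop tendsto_id).neg
  refine tendsto_of_tendsto_of_tendsto_of_le_of_le' hlower tendsto_const_nhds ?_ ?_
  · filter_upwards [eventually_gt_atTop 0] with t ht
    have hsqrt : √(a + t ^ 2) ≤ t + a / t := by
      have : t * (a / t) = a := mul_div_cancel₀ a ht.ne'
      rw [Real.sqrt_le_left (by positivity)]
      nlinarith [sq_nonneg (a / t)]
    linarith
  · filter_upwards with t
    linarith [Real.le_sqrt_of_sq_le (le_add_of_nonneg_left ha : t ^ 2 ≤ a + t ^ 2)]

namespace Matrix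

variable {ι : Type*} [Fintype ι]

theorem IsSymm.dotProduct_mulVec_comm {R : Type*} [CommSemiring R] {M : Matrix ι ι R}
    (hM : M.IsSymm) (u v : ι → R) : u ⬝ᵥ M *ᵥ v = v ⬝ᵥ M *ᵥ u := by
  rw [dotProduct_mulVec, dotProduct_comm, ← mulVec_transpose, hM.eq]

theorem PosSemidef.sq_dotProduct_mulVec_le {M : Matrix ι ι ℝ} (hM : M.PosSemidef)
    (u v : ι → ℝ) : (u ⬝ᵥ M *ᵥ v) ^ 2 ≤ (u ⬝ᵥ M *ᵥ u) * (v ⬝ᵥ M *ᵥ v) := by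
  have hsymm : M.IsSymm := isHermitian_iff_isSymm.mp hM.isHermitian
  have hquad : ∀ t : ℝ,
      0 ≤ (v ⬝ᵥ M *ᵥ v) * (t * t) + 2 * (u ⬝ᵥ M *ᵥ v) * t + u ⬝ᵥ M *ᵥ u := fun t => by
    have := hM.dotProduct_mulVec_nonneg (u + t • v)
    simp only [star_trivial, mulVec_add, mulVec_smul, dotProduct_add, add_dotProduct,
      dotProduct_smul, smul_dotProduct, smul_eq_mul, hsymm.dotProduct_mulVec_comm v u] at this
    linarith
  have := discrim_le_zero hquad
  rw [discrim] at this
  nlinarith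

variable [DecidableEq ι] {M : Matrix ι ι ℝ}

theorem PosDef.mulVec_inv_mulVec (hM : M.PosDef) (v : ι → ℝ) : M *ᵥ M⁻¹ *ᵥ v = v := by
  rw [mulVec_mulVec, mul_nonsing_inv _ hM.det_pos.ne'.isUnit, one_mulVec]

theorem PosDef.sq_dotProduct_le (hM : M.PosDef) (c v : ι → ℝ) :
    (c ⬝ᵥ v) ^ 2 ≤ (c ⬝ᵥ M⁻¹ *ᵥ c) * (v ⬝ᵥ M *ᵥ v) := by
  have hsymm : M.IsSymm := isHermitian_iff_isSymm.mp hM.isHermitian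
  have := hM.posSemidef.sq_dotProduct_mulVec_le (M⁻¹ *ᵥ c) v
  rwa [hsymm.dotProduct_mulVec_comm _ v, hM.mulVec_inv_mulVec,
    dotProduct_comm v, dotProduct_comm _ c] at this

theorem PosDef.dotProduct_lt_sqrt_sq_add (hM : M.PosDef) {c : ι → ℝ}
    (hc : c ⬝ᵥ M⁻¹ *ᵥ c ≤ 1) {δ : ℝ} (hδ : δ ≠ 0) (v : ι → ℝ) :
    c ⬝ᵥ v < √(δ ^ 2 + v ⬝ᵥ M *ᵥ v) := by
  have hq : 0 ≤ v ⬝ᵥ M *ᵥ v := by simpa using hM.posSemidef.dotProduct_mulVec_nonneg v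
  refine Real.lt_sqrt_of_sq_lt ?_
  calc (c ⬝ᵥ v) ^ 2 ≤ (c ⬝ᵥ M⁻¹ *ᵥ c) * (v ⬝ᵥ M *ᵥ v) := hM.sq_dotProduct_le c v
    _ ≤ v ⬝ᵥ M *ᵥ v := mul_le_of_le_one_left hq hc
    _ < δ ^ 2 + v ⬝ᵥ M *ᵥ v := lt_add_of_pos_left _ (by positivity)

end Matrix

theorem socf_max_case5 {n : ℕ} (c xs : Fin n → ℝ) (d δ : ℝ)
    (M : Matrix (Fin n) (Fin n) ℝ) (hM : M.PosDef) (hδ : 0 < δ)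
    (hc : c ⬝ᵥ M⁻¹.mulVec c = 1)
    (f : (Fin n → ℝ) → ℝ)
    (hf : ∀ x, f x = c ⬝ᵥ x + d - Real.sqrt (δ ^ 2 + (x - xs) ⬝ᵥ M.mulVec (x - xs))) :
    (∀ x, f x < c ⬝ᵥ xs + d) ∧ IsLUB (Set.range f) (c ⬝ᵥ xs + d) := by
  have hbound : ∀ x, f x < c ⬝ᵥ xs + d := fun x => by
    have := hM.dotProduct_lt_sqrt_sq_add hc.le hδ.ne' (x - xs)
    rw [dotProduct_sub] at this
    rw [hf]
    linarith
  have hray : ∀ t : ℝ, f (xs + t • M⁻¹ *ᵥ c) = c ⬝ᵥ xs + d + (t - √(δ ^ 2 + t ^ 2)) := fun t => by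
    rw [hf, add_sub_cancel_left, mulVec_smul, hM.mulVec_inv_mulVec, dotProduct_add,
      dotProduct_smul, smul_dotProduct, dotProduct_smul, dotProduct_comm _ c, hc]
    simp only [smul_eq_mul]
    ring_nf
  have hlim : Tendsto (fun t : ℝ => f (xs + t • M⁻¹ *ᵥ c)) atTop (𝓝 (c ⬝ᵥ xs + d)) := by
    simpa [hray] using (tendsto_sub_sqrt_add_sq_atTop (sq_nonneg δ)).const_add (c ⬝ᵥ xs + d)
  refine ⟨hbound, ?_, fun b hb => le_of_tendsto' hlim fun t => hb (Set.mem_range_self _)⟩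
  rintro _ ⟨x, rfl⟩
  exact (hbound x).le
end
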